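/- Let ω be an invertible antisymmetric real n×n matrix and α an antisymmetric real n×n matrix. Define matrices T_p (p ≥ 1) by T_1 = (1/2)·α and, for p ≥ 2, T_p = (1/2)·Σ_{l=1}^{p-1} T_l ⋄ T_{p-l}. Then for every p ≥ 1, T_p = σ_p · α^{⋄p}, where σ_p = C_{p-1}/2^{2p-1} (C_m the m-th Catalan number), i.e. the σ_p are the Taylor coefficients of 1 - √(1-x). -/
import Mathlib


open Matrix

/-- Covariant diamond contraction: `(α ⋄ β) = αᵀ * ω⁻¹ * β`. -/
noncomputable def diamondCov {n : ℕ} (ω α β : Matrix (Fin n) (Fin n) ℝ) :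
    Matrix (Fin n) (Fin n) ℝ :=
  αᵀ * ω⁻¹ * β

/-- Diamond powers: `α^{⋄1} = α`, `α^{⋄(k+1)} = α ⋄ α^{⋄k}`. -/
noncomputable def diamondPow {n : ℕ} (ω α : Matrix (Fin n) (Fin n) ℝ) :
    ℕ → Matrix (Fin n) (Fin n) ℝ
  | 0 => 1
  | 1 => α
  | (k + 2) => diamondCov ω α (diamondPow ω α (k + 1))

lemma diamond_pow_add {n : ℕ} (ω α : Matrix (Fin n) (Fin n) ℝ)
    (hω : IsUnit ω.det) (hωskew : ωᵀ = -ω) (hα : αᵀ = -α) :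
    ∀ k, 1 ≤ k → ∀ m, 1 ≤ m →
      (diamondPow ω α k)ᵀ * ω⁻¹ * (diamondPow ω α m) = diamondPow ω α (k + m) := by
  have hinvT : (ω⁻¹)ᵀ = -ω⁻¹ := by
    rw [Matrix.transpose_nonsing_inv, hωskew]
    refine Matrix.inv_eq_right_inv ?_
    rw [Matrix.neg_mul, Matrix.mul_neg, neg_neg, Matrix.mul_nonsing_inv _ hω]
  have key : ∀ m, 1 ≤ m → αᵀ * ω⁻¹ * diamondPow ω α m = diamondPow ω α (m + 1) := by
    intro m hm
    obtain ⟨m', rfl⟩ : ∃ m', m = m' + 1 := ⟨m - 1, by omega⟩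
    rfl
  intro k hk
  induction k, hk using Nat.le_induction with
  | base =>
    intro m hm
    have : diamondPow ω α 1 = α := rfl
    rw [this, key m hm, Nat.add_comm]
  | succ k hk ih =>
    intro m hm
    rw [← key k hk]
    have hmain : (αᵀ * ω⁻¹ * diamondPow ω α k)ᵀ * ω⁻¹ * diamondPow ω α m
        = (diamondPow ω α k)ᵀ * ω⁻¹ * (αᵀ * ω⁻¹ * diamondPow ω α m) := by
      simp only [Matrix.transpose_mul, Matrix.transpose_transpose, hinvT, hα,
        Matrix.mul_neg, Matrix.neg_mul, neg_neg, Matrix.mul_assoc, Matrix.transpose_neg]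
    have hidx : k + 1 + m = k + (m + 1) := by omega
    rw [hmain, key m hm, ih (m + 1) (by omega), hidx]

theorem T_eq_sigma_diamondPow {n : ℕ} (ω α : Matrix (Fin n) (Fin n) ℝ)
    (hω : IsUnit ω.det) (hωskew : ωᵀ = -ω) (hα : αᵀ = -α)
    (T : ℕ → Matrix (Fin n) (Fin n) ℝ)
    (hT1 : T 1 = (1/2 : ℝ) • α)
    (hTrec : ∀ p : ℕ, 2 ≤ p →
      T p = (1/2 : ℝ) • ∑ l ∈ Finset.Ico 1 p, diamondCov ω (T l) (T (p - l))) :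
    ∀ p : ℕ, 1 ≤ p →
      T p = ((catalan (p - 1) : ℝ) / 2 ^ (2 * p - 1)) • diamondPow ω α p := by
  intro p
  induction p using Nat.strong_induction_on with
  | _ p ih =>
    intro hp
    rcases Nat.eq_or_lt_of_le hp with h | h
    · subst h
      simpa [diamondPow] using hT1
    · have hp2 : 2 ≤ p := h
      rw [hTrec p hp2]
      have hterm : ∀ l ∈ Finset.Ico 1 p, diamondCov ω (T l) (T (p - l))
          = ((catalan (l-1) * catalan (p-l-1) : ℝ) / 2 ^ (2*p-2)) • diamondPow ω α p := by
        intro l hl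
        simp only [Finset.mem_Ico] at hl
        have h1 := ih l (by omega) hl.1
        have h2 := ih (p - l) (by omega) (by omega)
        rw [diamondCov, h1, h2]
        rw [Matrix.transpose_smul, Matrix.smul_mul, Matrix.smul_mul, Matrix.mul_smul,
          diamond_pow_add ω α hω hωskew hα l hl.1 (p - l) (by omega), smul_smul]
        have hidx : l + (p - l) = p := by omega
        have he : 2 * l - 1 + (2 * (p - l) - 1) = 2 * p - 2 := by omega
        rw [hidx, div_mul_div_comm, ← pow_add, he]
      rw [Finset.sum_congr rfl hterm, ← Finset.sum_smul, smul_smul]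
      congr 1
      rw [← Finset.sum_div]
      have hsum : ∑ l ∈ Finset.Ico 1 p, ((catalan (l-1) : ℝ) * catalan (p-l-1))
          = (catalan (p - 1) : ℝ) := by
        have hn : ∑ l ∈ Finset.Ico 1 p, (catalan (l-1)) * catalan (p-l-1) = catalan (p-1) := by
          rw [Finset.sum_Ico_eq_sum_range]
          have hp1 : p - 1 = (p - 2) + 1 := by omega
          rw [hp1, catalan_succ', Finset.Nat.sum_antidiagonal_eq_sum_range_succ_mk]
          apply Finset.sum_congr rfl
          intro i hi
          simp only [Finset.mem_range] at hi
          congr 1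
          · congr 1; omega
          · congr 1; omega
        exact_mod_cast hn
      rw [hsum]
      have h2p : 2 * p - 1 = (2 * p - 2) + 1 := by omega
      rw [h2p, pow_succ]
      ring
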